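/- For irrational x with continued fraction x = [a_0; a_1, a_2, …], the intermediate convergents (k p_{n−1} + p_{n−2})/(k q_{n−1} + q_{n−2}) with 1 ≤ k < a_n satisfy |q_{n,k} x − p_{n,k}| > |q_{n,k+1} x − p_{n,k+1}| for 1 ≤ k < a_n − 1; that is, the quantities |q_{n,i} x − p_{n,i}| are strictly decreasing in i. -/

import Mathlib

/-- Iterates of the Gauss map procedure producing complete quotients of `x`:
`t₀ = x`, `tₙ₊₁ = 1/(tₙ − ⌊tₙ⌋)`. -/
noncomputable def gaussIter (x : ℝ) : ℕ → ℝ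
  | 0 => x
  | n + 1 => (gaussIter x n - ⌊gaussIter x n⌋)⁻¹

/-- The partial quotients `aₙ = ⌊tₙ⌋` of the regular continued fraction of `x`. -/
noncomputable def cfA (x : ℝ) (n : ℕ) : ℤ := ⌊gaussIter x n⌋

/-- Numerators of the principal convergents, shifted by one:
`cfP x 0 = p₋₁ = 1`, `cfP x (n+1) = pₙ`. -/
noncomputable def cfP (x : ℝ) : ℕ → ℤ
  | 0 => 1
  | 1 => ⌊x⌋
  | n + 2 => cfA x (n + 1) * cfP x (n + 1) + cfP x n

/-- Denominators of the principal convergents, shifted by one: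
`cfQ x 0 = q₋₁ = 0`, `cfQ x (n+1) = qₙ`. -/
noncomputable def cfQ (x : ℝ) : ℕ → ℤ
  | 0 => 0
  | 1 => 1
  | n + 2 => cfA x (n + 1) * cfQ x (n + 1) + cfQ x n


/-!
Write `Eₘ = qₘ₋₁ x − pₘ₋₁` and let `tₘ` be the complete quotients, so that `aₘ = ⌊tₘ⌋`.
The classical identity `Eₘ₊₁ tₘ₊₁ = −Eₘ` turns the error of the intermediate convergent into
`k Eₙ + Eₙ₋₁ = Eₙ (k − tₙ)`. Since `Eₙ ≠ 0` for irrational `x` and `k + 1 < aₙ ≤ tₙ`, the factor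
`|k − tₙ| = tₙ − k` strictly decreases as `k` grows.
-/

/-- `cfErr x m = qₘ₋₁ x − pₘ₋₁`, with the same index shift as `cfP` and `cfQ`. -/
noncomputable def cfErr (x : ℝ) (m : ℕ) : ℝ := (cfQ x m : ℝ) * x - (cfP x m : ℝ)

lemma gaussIter_succ (x : ℝ) (n : ℕ) :
    gaussIter x (n + 1) = (Int.fract (gaussIter x n))⁻¹ := rfl

lemma irrational_gaussIter {x : ℝ} (hx : Irrational x) (n : ℕ) :
    Irrational (gaussIter x n) := by
  induction n with
  | zero => exact hx
  | succ n ih => exact (ih.sub_intCast _).inv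

lemma fract_gaussIter_ne_zero {x : ℝ} (hx : Irrational x) (n : ℕ) :
    Int.fract (gaussIter x n) ≠ 0 :=
  ((irrational_gaussIter hx n).sub_intCast _).ne_zero

lemma cfErr_zero (x : ℝ) : cfErr x 0 = -1 := by
  simp [cfErr, cfP, cfQ]

lemma cfErr_add_two (x : ℝ) (m : ℕ) :
    cfErr x (m + 2) = cfA x (m + 1) * cfErr x (m + 1) + cfErr x m := by
  simp only [cfErr, cfP, cfQ]
  push_cast
  ring

lemma cfErr_succ_mul_gaussIter_succ {x : ℝ} (hx : Irrational x) (m : ℕ) :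
    cfErr x (m + 1) * gaussIter x (m + 1) = -cfErr x m := by
  induction m with
  | zero =>
    have h1 : cfErr x 1 = Int.fract (gaussIter x 0) := by
      simp [cfErr, cfP, cfQ, gaussIter, Int.self_sub_floor]
    rw [h1, gaussIter_succ, mul_inv_cancel₀ (fract_gaussIter_ne_zero hx 0),
      cfErr_zero, neg_neg]
  | succ m ih =>
    have hE : cfErr x (m + 2) = -cfErr x (m + 1) * Int.fract (gaussIter x (m + 1)) := by
      rw [cfErr_add_two, Int.fract, cfA]
      linear_combination ih
    rw [hE, gaussIter_succ x (m + 1), mul_assoc,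
      mul_inv_cancel₀ (fract_gaussIter_ne_zero hx (m + 1)), mul_one]

lemma cfErr_ne_zero {x : ℝ} (hx : Irrational x) (m : ℕ) : cfErr x m ≠ 0 := by
  induction m with
  | zero => simp [cfErr_zero]
  | succ m ih =>
    intro h
    apply ih
    simpa [h] using (cfErr_succ_mul_gaussIter_succ hx m).symm

lemma intermediate_error_eq_cfErr_mul {x : ℝ} (hx : Irrational x) (m : ℕ) (k : ℤ) :
    ((k * cfQ x (m + 1) + cfQ x m : ℤ) : ℝ) * x - ((k * cfP x (m + 1) + cfP x m : ℤ) : ℝ) =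
      cfErr x (m + 1) * (k - gaussIter x (m + 1)) := by
  have key := cfErr_succ_mul_gaussIter_succ hx m
  simp only [cfErr] at key ⊢
  push_cast
  linear_combination key

lemma abs_mul_sub_lt_of_add_one_le {A t k : ℝ} (hA : A ≠ 0) (hkt : k + 1 ≤ t) :
    |A * (k + 1 - t)| < |A * (k - t)| := by
  rw [abs_mul, abs_mul, abs_of_nonpos (a := k + 1 - t) (by linarith),
    abs_of_neg (a := k - t) (by linarith)]
  exact mul_lt_mul_of_pos_left (by linarith) (abs_pos.mpr hA)

theorem intermediate_convergents_strictly_decreasing_general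
    (x : ℝ) (hx : Irrational x) (n : ℕ) (hn : 1 ≤ n) (k : ℤ)
    (hk2 : k + 1 < cfA x n) :
    |((k * cfQ x n + cfQ x (n - 1) : ℤ) : ℝ) * x - ((k * cfP x n + cfP x (n - 1) : ℤ) : ℝ)| >
      |(((k + 1) * cfQ x n + cfQ x (n - 1) : ℤ) : ℝ) * x -
        (((k + 1) * cfP x n + cfP x (n - 1) : ℤ) : ℝ)| := by
  obtain ⟨m, rfl⟩ : ∃ m, n = m + 1 := ⟨n - 1, by omega⟩
  have hkt : (k : ℝ) + 1 ≤ gaussIter x (m + 1) :=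
    calc (k : ℝ) + 1 ≤ cfA x (m + 1) := by exact_mod_cast hk2.le
      _ ≤ gaussIter x (m + 1) := Int.floor_le _
  rw [Nat.add_sub_cancel, intermediate_error_eq_cfErr_mul hx, intermediate_error_eq_cfErr_mul hx, Int.cast_add,
    Int.cast_one]
  exact abs_mul_sub_lt_of_add_one_le (cfErr_ne_zero hx (m + 1)) hkt

/-- the quantities `|q_{n,k} x − p_{n,k}|` attached to the intermediate
convergents are strictly decreasing in `k` for `1 ≤ k < aₙ`. -/
theorem intermediate_convergents_strictly_decreasing
    (x : ℝ) (hx : Irrational x) (n : ℕ) (hn : 1 ≤ n) (k : ℤ)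
    (hk : 1 ≤ k) (hk2 : k + 1 < cfA x n) :
    |((k * cfQ x n + cfQ x (n - 1) : ℤ) : ℝ) * x - ((k * cfP x n + cfP x (n - 1) : ℤ) : ℝ)| >
      |(((k + 1) * cfQ x n + cfQ x (n - 1) : ℤ) : ℝ) * x -
        (((k + 1) * cfP x n + cfP x (n - 1) : ℤ) : ℝ)| :=
  intermediate_convergents_strictly_decreasing_general x hx n hn k hk2
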